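/- Let Λ ∈ ℝ, r₀ > 0 and C ≠ 0, and define φ(ρ) = -(4/(C²r₀²))·[1 - 2(1 - 2Λr₀²/3)/(1 + Cρ/2) - (Λr₀²/3)(1 + Cρ/2)² + (1 - Λr₀²)/(1 + Cρ/2)²] on a neighbourhood of 0 where 1 + Cρ/2 ≠ 0. Then φ(0) = 0, φ'(0) = 0, and for every natural number k the (k+2)-nd iterated derivative of φ at 0 equals (1/r₀²)·[(2Λr₀²/3)·δ_{0k} - (1 - Λr₀²)(k+3)! + 2(1 - 2Λr₀²/3)(k+2)!]·(-C/2)^k, where δ_{0k} is 1 if k = 0 and 0 otherwise. -/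

import Mathlib

/-!
With `u = 1 + Cρ/2`, `φ` is the Laurent polynomial `a (1 - b u⁻¹ - e u² + d u⁻²)` in an affine
function of `ρ`. Since `dⁿ/dxⁿ (1 + c x)ᵐ = m (m - 1) ⋯ (m - n + 1) cⁿ` at `x = 0`, the falling
factorials of `-1` and `-2` turn into `± n!` and `± (n + 1)!`, and the quadratic term only
contributes to the second derivative; the prefactor `a = -4 / (C² r₀²)` cancels `(C/2)²`.
-/

open Finset

variable {𝕜 : Type*} [NontriviallyNormedField 𝕜]

theorem iteratedDeriv_comp_mul_left {E : Type*} [NormedAddCommGroup E] [NormedSpace 𝕜 E]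
    (f : 𝕜 → E) (c : 𝕜) (n : ℕ) :
    iteratedDeriv n (fun x => f (c * x)) = fun x => c ^ n • iteratedDeriv n f (c * x) := by
  induction n with
  | zero => simp
  | succ n ih =>
    funext x
    rw [iteratedDeriv_succ, ih, deriv_fun_const_smul_field,
      deriv_comp_mul_left c (iteratedDeriv n f), iteratedDeriv_succ, smul_smul, pow_succ]

theorem iteratedDeriv_one_add_mul_zpow (m : ℤ) (c : 𝕜) (n : ℕ) (x : 𝕜) :
    iteratedDeriv n (fun y => (1 + c * y) ^ m) x =
      (∏ i ∈ range n, ((m : 𝕜) - i)) * c ^ n * (1 + c * x) ^ (m - n) := by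
  rw [iteratedDeriv_comp_mul_left (fun y => (1 + y) ^ m),
    iteratedDeriv_comp_const_add n (fun y => y ^ m), iteratedDeriv_eq_iterate]
  simp only [iter_deriv_zpow, smul_eq_mul]
  ring

theorem contDiffAt_one_add_mul_zpow [CompleteSpace 𝕜] {c x : 𝕜} (h : 1 + c * x ≠ 0) (m : ℤ)
    (n : WithTop ℕ∞) : ContDiffAt 𝕜 n (fun y => (1 + c * y) ^ m) x :=
  (AnalyticAt.fun_zpow (f := fun y => 1 + c * y) (by fun_prop) h).contDiffAt

section FallingFactorial

variable {R : Type*} [CommRing R]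

theorem prod_range_neg_one_sub (n : ℕ) :
    ∏ i ∈ range n, (-1 - (i : R)) = (-1) ^ n * n.factorial := by
  induction n with
  | zero => simp
  | succ n ih => rw [prod_range_succ, ih, Nat.factorial_succ]; push_cast; ring

theorem prod_range_neg_two_sub (n : ℕ) :
    ∏ i ∈ range n, (-2 - (i : R)) = (-1) ^ n * (n + 1).factorial := by
  induction n with
  | zero => simp
  | succ n ih => rw [prod_range_succ, ih, Nat.factorial_succ (n + 1)]; push_cast; ring

theorem prod_range_two_sub (k : ℕ) :
    ∏ i ∈ range (k + 2), (2 - (i : R)) = if k = 0 then 2 else 0 := by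
  rcases k with _ | k
  · norm_num [prod_range_succ]
  · rw [if_neg k.succ_ne_zero]
    exact prod_eq_zero (i := 2) (by simp) (by norm_num)

end FallingFactorial

theorem iteratedDeriv_laurent_one_add_mul_zero [CompleteSpace 𝕜] (a b e d c : 𝕜) {n : ℕ}
    (hn : n ≠ 0) :
    iteratedDeriv n (fun x => a * (1 - b * (1 + c * x) ^ (-1 : ℤ) - e * (1 + c * x) ^ (2 : ℤ)
        + d * (1 + c * x) ^ (-2 : ℤ))) 0 =
      a * ((-c) ^ n * (d * (n + 1).factorial - b * n.factorial)
        - e * c ^ n * ∏ i ∈ range n, (2 - (i : 𝕜))) := by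
  have hu := fun m : ℤ => contDiffAt_one_add_mul_zpow (c := c) (x := 0) (by simp) m n
  rw [iteratedDeriv_const_mul_field, iteratedDeriv_fun_add (by fun_prop) (by fun_prop),
    iteratedDeriv_fun_sub (by fun_prop) (by fun_prop),
    iteratedDeriv_const_sub (Nat.pos_of_ne_zero hn)]
  simp only [iteratedDeriv_neg, iteratedDeriv_const_mul_field, iteratedDeriv_one_add_mul_zpow,
    mul_zero, add_zero, one_zpow, mul_one, Int.cast_neg, Int.cast_one, Int.cast_ofNat,
    prod_range_neg_one_sub, prod_range_neg_two_sub, neg_pow c]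
  ring

theorem phi_taylor_coefficients (Λ r₀ C : ℝ) (hC : C ≠ 0) :
    let φ : ℝ → ℝ := fun ρ =>
      -(4 / (C ^ 2 * r₀ ^ 2)) *
        (1 - 2 * (1 - 2 * Λ * r₀ ^ 2 / 3) / (1 + C * ρ / 2)
          - (Λ * r₀ ^ 2 / 3) * (1 + C * ρ / 2) ^ 2
          + (1 - Λ * r₀ ^ 2) / (1 + C * ρ / 2) ^ 2)
    φ 0 = 0 ∧ deriv φ 0 = 0 ∧
    ∀ k : ℕ, iteratedDeriv (k + 2) φ 0 =
      (1 / r₀ ^ 2) *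
        ((2 * Λ * r₀ ^ 2 / 3) * (if k = 0 then 1 else 0)
          - (1 - Λ * r₀ ^ 2) * (Nat.factorial (k + 3))
          + 2 * (1 - 2 * Λ * r₀ ^ 2 / 3) * (Nat.factorial (k + 2))) * (-C / 2) ^ k := by
  intro φ
  have hφ : φ = fun ρ => -(4 / (C ^ 2 * r₀ ^ 2)) * (1 - 2 * (1 - 2 * Λ * r₀ ^ 2 / 3)
      * (1 + C / 2 * ρ) ^ (-1 : ℤ) - (Λ * r₀ ^ 2 / 3) * (1 + C / 2 * ρ) ^ (2 : ℤ)
      + (1 - Λ * r₀ ^ 2) * (1 + C / 2 * ρ) ^ (-2 : ℤ)) := by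
    funext ρ
    simp only [φ, zpow_neg, zpow_ofNat, div_eq_mul_inv]
    ring
  have hD : ∀ n ≠ 0, iteratedDeriv n φ 0 = _ := fun n hn =>
    hφ ▸ iteratedDeriv_laurent_one_add_mul_zero _ _ _ _ _ hn
  have hscale : -(4 / (C ^ 2 * r₀ ^ 2)) * (C / 2) ^ 2 = -(1 / r₀ ^ 2) := by
    field_simp
    ring
  refine ⟨?_, ?_, fun k => ?_⟩
  · simp only [φ]
    ring
  · rw [← iteratedDeriv_one, hD 1 one_ne_zero]
    push_cast [prod_range_one, Nat.factorial]
    ring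
  · rw [hD (k + 2) (by omega), prod_range_two_sub, neg_div, pow_add (-(C / 2)), pow_add (C / 2),
      neg_sq, show k + 2 + 1 = k + 3 from rfl]
    split_ifs with hk
    · subst hk
      linear_combination ((1 - Λ * r₀ ^ 2) * 6 - 2 * (1 - 2 * Λ * r₀ ^ 2 / 3) * 2
        - Λ * r₀ ^ 2 / 3 * 2) * hscale
    · linear_combination (-(C / 2)) ^ k * ((1 - Λ * r₀ ^ 2) * (k + 3).factorial
        - 2 * (1 - 2 * Λ * r₀ ^ 2 / 3) * (k + 2).factorial) * hscale
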